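/- arXiv:1508.05952 — 3 statements merged into one kernel-verified Lean document; each statement's English description precedes it below -/
import Mathlib

section
/- If u is a subword of w, then for any x ∈ A^ℕ and L ∈ ℕ, the disjoint upper densities satisfy D_L(u,x) ≥ (|u|/(2|w|)) · D_L(w,x). -/
open Filter

/-- The word `w` occurs in `x` beginning at (0-indexed) position `i`. -/
def occursAt {A : Type*} (x : ℕ → A) (w : List A) (i : ℕ) : Prop :=
  ∀ k, k < w.length → w[k]? = some (x (i + k))
open Classical in
/-- Indicator that `w` begins somewhere in the `j`-th consecutive block of length
`L * |w|` of `x` (blocks indexed from `j = 0`). -/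
noncomputable def rBlock {A : Type*} (L : ℕ) (w : List A) (x : ℕ → A) (j : ℕ) : ℕ :=
  if ∃ i, j * (L * w.length) ≤ i ∧ i < (j + 1) * (L * w.length) ∧ occursAt x w i
  then 1 else 0

/-- The sum function `S_{L,N}(w,x)`. -/
noncomputable def sumFn {A : Type*} (L : ℕ) (w : List A) (x : ℕ → A) (N : ℕ) : ℕ :=
  ∑ j ∈ Finset.range N, rBlock L w x j

/-- The disjoint upper density `D_L(w,x)`. -/
noncomputable def densD {A : Type*} (L : ℕ) (w : List A) (x : ℕ → A) : ℝ :=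
  Filter.limsup (fun N => (sumFn L w x N : ℝ) / N) Filter.atTop

section Aux

variable {A : Type*}

lemma rBlock_le_one (L : ℕ) (v : List A) (x : ℕ → A) (j : ℕ) : rBlock L v x j ≤ 1 := by
  unfold rBlock; split <;> simp

lemma rBlock_eq_one_iff (L : ℕ) (v : List A) (x : ℕ → A) (j : ℕ) : rBlock L v x j = 1 ↔
    ∃ i, j * (L * v.length) ≤ i ∧ i < (j + 1) * (L * v.length) ∧ occursAt x v i := by
  unfold rBlock; split <;> simp_all

lemma sumFn_mono (L : ℕ) (v : List A) (x : ℕ → A) {N N' : ℕ} (h : N ≤ N') :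
    sumFn L v x N ≤ sumFn L v x N' :=
  Finset.sum_le_sum_of_subset (Finset.range_subset_range.2 h)

lemma sumFn_le (L : ℕ) (v : List A) (x : ℕ → A) (N : ℕ) : sumFn L v x N ≤ N := by
  calc sumFn L v x N ≤ ∑ _j ∈ Finset.range N, 1 :=
        Finset.sum_le_sum (fun j _ => rBlock_le_one L v x j)
    _ = N := by simp

open Classical in
lemma card_le_sumFn (L : ℕ) (v : List A) (x : ℕ → A) (N : ℕ) :
    ((Finset.range N).filter (fun j => rBlock L v x j = 1)).card ≤ sumFn L v x N := by
  classical
  calc ((Finset.range N).filter (fun j => rBlock L v x j = 1)).card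
      = ∑ j ∈ (Finset.range N).filter (fun j => rBlock L v x j = 1), rBlock L v x j := by
        rw [Finset.sum_congr rfl (fun j hj => (Finset.mem_filter.1 hj).2)]; simp
    _ ≤ sumFn L v x N := Finset.sum_le_sum_of_subset (Finset.filter_subset _ _)

open Classical in
lemma sumFn_eq_card (L : ℕ) (v : List A) (x : ℕ → A) (N : ℕ) :
    sumFn L v x N = ((Finset.range N).filter (fun j => rBlock L v x j = 1)).card := by
  classical
  have h1 : sumFn L v x N
      = ∑ j ∈ Finset.range N, (if rBlock L v x j = 1 then 1 else 0) := by
    refine Finset.sum_congr rfl fun j _ => ?_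
    by_cases hj : rBlock L v x j = 1
    · simp [hj]
    · have h0 : rBlock L v x j = 0 := by have := rBlock_le_one L v x j; omega
      simp [hj, h0]
  rw [h1, Finset.sum_boole]
  simp

lemma occursAt_infix {u w : List A} {x : ℕ → A} (s t : List A)
    (hst : s ++ u ++ t = w) {i : ℕ} (hw : occursAt x w i) : occursAt x u (i + s.length) := by
  intro k hk
  have hlen : s.length + u.length + t.length = w.length := by
    rw [← hst]; simp [List.length_append]; omega
  have h1 : u[k]? = w[s.length + k]? := by
    rw [← hst, List.getElem?_append_left (by simp [List.length_append]; omega),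
      List.getElem?_append_right (by omega)]
    simp
  rw [h1, hw (s.length + k) (by omega)]
  congr 2
  omega

set_option maxHeartbeats 1000000 in
lemma key_count {u w : List A} (x : ℕ → A) (L : ℕ)
    (hL : 0 < L) (hu : 0 < u.length) (h : u <:+: w) (N : ℕ) :
    sumFn L w x (u.length * N) ≤ 2 * sumFn L u x (w.length * N) + 1 := by
  classical
  obtain ⟨s, t, hst⟩ := h
  have hab : u.length ≤ w.length := by
    rw [← hst]; simp [List.length_append]; omega
  have hb : 0 < w.length := lt_of_lt_of_le hu hab
  have hq : s.length + u.length ≤ w.length := by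
    rw [← hst]; simp [List.length_append]
  have hLa : 0 < L * u.length := Nat.mul_pos hL hu
  -- choice of u-occurrence positions
  have hch : ∀ j, ∃ p, rBlock L w x j = 1 →
      j * (L * w.length) ≤ p ∧ p < (j + 1) * (L * w.length) + (w.length - u.length) ∧
        occursAt x u p := by
    intro j
    by_cases hj : rBlock L w x j = 1
    · obtain ⟨i, hi1, hi2, hocc⟩ := (rBlock_eq_one_iff L w x j).1 hj
      exact ⟨i + s.length, fun _ => ⟨by omega, by omega, occursAt_infix s t hst hocc⟩⟩
    · exact ⟨0, fun hc => absurd hc hj⟩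
  choose p hp using hch
  set β : ℕ → ℕ := fun j => p j / (L * u.length) with hβ
  set T := (Finset.range (u.length * N)).filter (fun j => rBlock L w x j = 1) with hT
  have hmemT : ∀ j ∈ T, rBlock L w x j = 1 := fun j hj => (Finset.mem_filter.1 hj).2
  have hβ1 : ∀ j ∈ T, rBlock L u x (β j) = 1 := by
    intro j hj
    obtain ⟨h1, h2, h3⟩ := hp j (hmemT j hj)
    refine (rBlock_eq_one_iff L u x (β j)).2 ⟨p j, Nat.div_mul_le_self _ _, ?_, h3⟩
    exact (Nat.div_lt_iff_lt_mul hLa).1 (Nat.lt_succ_self _)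
  have hstep : ∀ j ∈ T, ∀ j' ∈ T, j + 2 ≤ j' → β j + 1 ≤ β j' := by
    intro j hj j' hj' hjj
    obtain ⟨h1, h2, h3⟩ := hp j (hmemT j hj)
    obtain ⟨h1', h2', h3'⟩ := hp j' (hmemT j' hj')
    have hd : p j + L * u.length ≤ p j' := by
      have e1 : L * w.length = L * u.length + L * (w.length - u.length) := by
        rw [← Nat.mul_add, Nat.add_sub_cancel' hab]
      have e2 : w.length - u.length ≤ L * (w.length - u.length) :=
        Nat.le_mul_of_pos_left _ hL
      have e3 : (j + 2) * (L * w.length) ≤ j' * (L * w.length) :=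
        Nat.mul_le_mul_right _ hjj
      have e4 : (j + 2) * (L * w.length) = (j + 1) * (L * w.length) + L * w.length := by
        ring
      omega
    calc β j + 1 = (p j + L * u.length) / (L * u.length) :=
          (Nat.add_div_right _ hLa).symm
      _ ≤ p j' / (L * u.length) := Nat.div_le_div_right hd
  set T2 := T.filter (fun j => j + 1 < u.length * N) with hT2
  have hmemT2 : ∀ j ∈ T2, j ∈ T := fun j hj => (Finset.mem_filter.1 hj).1
  have hT2card : T.card ≤ T2.card + 1 := by
    have hsub : T ⊆ T2 ∪ {u.length * N - 1} := by
      intro j hj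
      have hjr : j < u.length * N := Finset.mem_range.1 (Finset.mem_filter.1 hj).1
      by_cases hc : j + 1 < u.length * N
      · exact Finset.mem_union_left _ (Finset.mem_filter.2 ⟨hj, hc⟩)
      · exact Finset.mem_union_right _ (by simp; omega)
    calc T.card ≤ (T2 ∪ {u.length * N - 1}).card := Finset.card_le_card hsub
      _ ≤ T2.card + 1 := le_trans (Finset.card_union_le _ _) (by simp)
  have hβ3 : ∀ j ∈ T2, β j < w.length * N := by
    intro j hj
    obtain ⟨hjT, hjlt⟩ := Finset.mem_filter.1 hj
    have hjr : j < u.length * N := Finset.mem_range.1 (Finset.mem_filter.1 hjT).1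
    obtain ⟨h1, h2, h3⟩ := hp j (hmemT j hjT)
    have goal' : p j < (w.length * N) * (L * u.length) := by
      have e5 : (j + 1) * (L * w.length) ≤ (u.length * N - 1) * (L * w.length) :=
        Nat.mul_le_mul_right _ (by omega)
      have e6 : (u.length * N - 1) * (L * w.length) + L * w.length
          = (u.length * N) * (L * w.length) := by
        rw [← Nat.succ_mul]; congr 1; omega
      have e7 : (u.length * N) * (L * w.length) = (w.length * N) * (L * u.length) := by
        ring
      have e9 : w.length ≤ L * w.length := Nat.le_mul_of_pos_left _ hL
      have e10 : w.length - u.length ≤ w.length := Nat.sub_le _ _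
      omega
    exact (Nat.div_lt_iff_lt_mul hLa).2 goal'
  have hfib : ∀ c ∈ T2.image β, (T2.filter (fun j => β j = c)).card ≤ 2 := by
    intro c _
    set F := T2.filter (fun j => β j = c) with hF
    rcases Finset.eq_empty_or_nonempty F with hFe | hFne
    · simp [hFe]
    · have hm := F.min'_mem hFne
      have hmemF : ∀ k ∈ F, k ∈ T := fun k hk => hmemT2 k (Finset.mem_filter.1 hk).1
      have hsub : F ⊆ Finset.Icc (F.min' hFne) (F.min' hFne + 1) := by
        intro j hj
        refine Finset.mem_Icc.2 ⟨F.min'_le j hj, ?_⟩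
        by_contra hcon
        push_neg at hcon
        have hj' := hstep (F.min' hFne) (hmemF _ hm) j (hmemF _ hj) (by omega)
        have e1 : β (F.min' hFne) = c := (Finset.mem_filter.1 hm).2
        have e2 : β j = c := (Finset.mem_filter.1 hj).2
        omega
      calc F.card ≤ _ := Finset.card_le_card hsub
        _ ≤ 2 := by rw [Nat.card_Icc]; omega
  have h2a : T2.card ≤ 2 * (T2.image β).card := Finset.card_le_mul_card_image T2 2 hfib
  have himg : (T2.image β)
      ⊆ (Finset.range (w.length * N)).filter (fun j => rBlock L u x j = 1) := by
    intro c hc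
    obtain ⟨j, hj, rfl⟩ := Finset.mem_image.1 hc
    exact Finset.mem_filter.2 ⟨Finset.mem_range.2 (hβ3 j hj), hβ1 j (hmemT2 j hj)⟩
  have hend : (T2.image β).card ≤ sumFn L u x (w.length * N) :=
    le_trans (Finset.card_le_card himg) (card_le_sumFn L u x (w.length * N))
  have hwcard : sumFn L w x (u.length * N) = T.card := sumFn_eq_card L w x (u.length * N)
  omega

end Aux

set_option maxHeartbeats 1600000 in
/-- if `u` is a subword of `w` then
`D_L(u,x) ≥ (|u|/(2|w|)) · D_L(w,x)`. -/
theorem densD_subword {A : Type*} (u w : List A) (x : ℕ → A) (L : ℕ)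
    (hL : 0 < L) (hu : 0 < u.length) (h : u <:+: w) :
    ((u.length : ℝ) / (2 * w.length)) * densD L w x ≤ densD L u x := by
  classical
  have hab : u.length ≤ w.length := h.length_le
  have hb : 0 < w.length := lt_of_lt_of_le hu hab
  have haR : (0:ℝ) < u.length := by exact_mod_cast hu
  have hbR : (0:ℝ) < w.length := by exact_mod_cast hb
  have hg_le : ∀ (v : List A) (N : ℕ), (sumFn L v x N : ℝ) / N ≤ 1 := by
    intro v N
    rcases Nat.eq_zero_or_pos N with h0 | h0
    · simp [h0]
    · rw [div_le_one (by exact_mod_cast h0)]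
      exact_mod_cast sumFn_le L v x N
  have hg_nonneg : ∀ (v : List A) (N : ℕ), (0:ℝ) ≤ (sumFn L v x N : ℝ) / N := by
    intro v N; positivity
  have hbddu : IsBoundedUnder (· ≤ ·) atTop (fun N => (sumFn L u x N : ℝ) / N) :=
    isBoundedUnder_of ⟨1, fun N => hg_le u N⟩
  have hE0 : 0 ≤ densD L u x :=
    Filter.le_limsup_of_frequently_le (Frequently.of_forall fun N => hg_nonneg u N) hbddu
  by_cases hD : densD L w x ≤ 0
  · have : ((u.length : ℝ) / (2 * w.length)) * densD L w x ≤ 0 :=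
      mul_nonpos_of_nonneg_of_nonpos (by positivity) hD
    linarith
  push_neg at hD
  -- main claim
  have hmain : ∀ c : ℝ, 0 ≤ c → c < densD L w x →
      ((u.length : ℝ) / (2 * w.length)) * c ≤ densD L u x := by
    intro c hc0 hcD
    set D := densD L w x with hDdef
    set c' := (c + D) / 2 with hc'
    have hc'1 : c < c' := by rw [hc']; linarith
    have hc'2 : c' < D := by rw [hc']; linarith
    have hc'0 : 0 < c' := by rw [hc']; linarith
    have hco : IsCoboundedUnder (· ≤ ·) atTop (fun N => (sumFn L w x N : ℝ) / N) :=
      (isBoundedUnder_of ⟨0, fun N => (hg_nonneg w N : _)⟩ :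
        IsBoundedUnder (· ≥ ·) atTop _).isCoboundedUnder_le
    have hfreq : ∃ᶠ N in atTop, c' < (sumFn L w x N : ℝ) / N :=
      Filter.frequently_lt_of_lt_limsup hco hc'2
    obtain ⟨N₀, hN₀⟩ := exists_nat_ge (((u.length : ℝ) * c' + 1) / ((u.length : ℝ) * (c' - c)))
    have hfreq2 : ∃ᶠ M in atTop,
        ((u.length : ℝ) / (2 * w.length)) * c ≤ (sumFn L u x M : ℝ) / M := by
      rw [frequently_atTop]
      intro K
      obtain ⟨N, hNge, hNc⟩ := frequently_atTop.1 hfreq (u.length * (K + N₀ + 1))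
      set N₁ := N / u.length + 1 with hN₁def
      have hdiv : K + N₀ + 1 ≤ N / u.length :=
        (Nat.le_div_iff_mul_le hu).2 (by rw [Nat.mul_comm]; exact hNge)
      have hdivle : N / u.length ≤ N := Nat.div_le_self N u.length
      have hNpos : 0 < N := by omega
      have hmul : u.length * N₁ = u.length * (N / u.length) + u.length := by
        rw [hN₁def, Nat.mul_add, Nat.mul_one]
      have hdam := Nat.div_add_mod N u.length
      have hmod : N % u.length < u.length := Nat.mod_lt N hu
      refine ⟨w.length * N₁, ?_, ?_⟩
      · calc K ≤ N₁ := by omega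
          _ ≤ w.length * N₁ := Nat.le_mul_of_pos_left _ hb
      · -- the main estimate
        have hNR : (0:ℝ) < N := by exact_mod_cast hNpos
        have hsum1 : c' * N ≤ (sumFn L w x N : ℝ) := by
          rw [lt_div_iff₀ hNR] at hNc; linarith
        have hsum2 : (sumFn L w x N : ℝ) ≤ (sumFn L w x (u.length * N₁) : ℝ) := by
          exact_mod_cast sumFn_mono L w x (by omega : N ≤ u.length * N₁)
        have hkeyN : (sumFn L w x (u.length * N₁) : ℝ) ≤
            2 * (sumFn L u x (w.length * N₁) : ℝ) + 1 := by
          exact_mod_cast key_count x L hL hu h N₁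
        have hNle : (u.length : ℝ) * N₁ ≤ (N : ℝ) + u.length := by
          have : u.length * N₁ ≤ N + u.length := by omega
          exact_mod_cast this
        have hN₁R : (1:ℝ) ≤ (N₁ : ℝ) := by exact_mod_cast (by omega : 1 ≤ N₁)
        have hN₀R : (N₀ : ℝ) ≤ (N₁ : ℝ) := by exact_mod_cast (by omega : N₀ ≤ N₁)
        have hccpos : (0:ℝ) < (u.length : ℝ) * (c' - c) := mul_pos haR (by linarith)
        have hN₀p : (u.length : ℝ) * c' + 1 ≤ (u.length : ℝ) * (c' - c) * N₀ := by
          rw [div_le_iff₀ hccpos] at hN₀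
          linarith
        have hN₀N₁ : (u.length : ℝ) * c' + 1 ≤ (u.length : ℝ) * (c' - c) * N₁ := by
          have := mul_le_mul_of_nonneg_left hN₀R hccpos.le
          linarith
        have hbNR : (0:ℝ) < ((w.length * N₁ : ℕ) : ℝ) := by
          push_cast; nlinarith
        rw [le_div_iff₀ hbNR]
        have hprod := mul_le_mul_of_nonneg_left hNle hc'0.le
        have hid : (u.length : ℝ) / (2 * w.length) * c * ((w.length * N₁ : ℕ) : ℝ)
            = (u.length : ℝ) * c * N₁ / 2 := by
          push_cast; field_simp
        rw [hid]
        nlinarith [hsum1, hsum2, hkeyN, hN₀N₁, hprod]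
    exact Filter.le_limsup_of_frequently_le hfreq2 hbddu
  -- conclude
  by_contra hcon
  push_neg at hcon
  set k := (u.length : ℝ) / (2 * w.length) with hk
  have hk0 : 0 < k := by rw [hk]; positivity
  set E := densD L u x with hE
  set D := densD L w x with hDdef
  have hEkD : E < k * D := hcon
  have hEk : E / k < D := by rw [div_lt_iff₀ hk0]; nlinarith
  have hEk0 : 0 ≤ E / k := div_nonneg hE0 hk0.le
  set c := (E / k + D) / 2 with hc
  have h1 : k * c ≤ E := hmain c (by rw [hc]; linarith) (by rw [hc]; linarith)
  have h2 : k * c = (E + k * D) / 2 := by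
    rw [hc]; field_simp
  nlinarith
end

section
/- Let v, ṽ be words with |ṽ| = |v| + ab for positive integers a, b, such that v begins at position 1 + ja in ṽ for each j = 0, …, b, and every occurrence of v in x is contained in an occurrence of ṽ. Then for any L, D_L(v,x) ≥ D_L(ṽ,x)/(4L + 8a/|v|) and D_L(ṽ,x) ≥ (1/27)·D_L(v,x). -/
/-!
Both inequalities come from double counting links between blocks of length `L|v|` that contain
an occurrence of `v` and blocks of length `L|ṽ|` that contain an occurrence of `ṽ`.
Every occurrence of `v` lies in an occurrence of `ṽ`, at most `ab` positions after its start,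
so every `v`-block is linked to some `ṽ`-block, and a `ṽ`-block only to the `v`-blocks in a
window of length about `L|ṽ| + ab`. Conversely, an occurrence of `ṽ` at `p` contains occurrences
of `v` at `p + t q a` with `q a ≥ L|v|`; these lie in distinct `v`-blocks, and since
`L|v| + ab ≤ L|ṽ|` each `v`-block is linked to at most two `ṽ`-blocks. Comparing the block
counts up to `N` and up to about `N|ṽ|/|v|` (resp. `N|v|/|ṽ|`) then passes to the limsups.
-/

open Filter Topology Finset

lemma occursAt_add_of_take_drop {A : Type*} {x : ℕ → A} {v w : List A} {m p : ℕ}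
    (hm : m + v.length ≤ w.length) (hvw : (w.drop m).take v.length = v) (h : occursAt x w p) :
    occursAt x v (p + m) := by
  intro k hk
  rw [← hvw, List.getElem?_take_of_lt hk, List.getElem?_drop, h _ (by omega), add_assoc]

open Classical in
noncomputable def hitBlocks (D : ℕ) (S : ℕ → Prop) (N : ℕ) : Finset ℕ :=
  {j ∈ range N | ∃ i, j * D ≤ i ∧ i < (j + 1) * D ∧ S i}

lemma sumFn_eq_card_hitBlocks {A : Type*} (L : ℕ) (w : List A) (x : ℕ → A) (N : ℕ) :
    sumFn L w x N = #(hitBlocks (L * w.length) (occursAt x w) N) := by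
  rw [hitBlocks, card_filter]
  rfl

lemma densD_eq_limsup_card_hitBlocks {A : Type*} (L : ℕ) (w : List A) (x : ℕ → A) :
    densD L w x =
      limsup (fun N => (#(hitBlocks (L * w.length) (occursAt x w) N) : ℝ) / N) atTop := by
  simp only [densD, sumFn_eq_card_hitBlocks]

lemma card_hitBlocks_le (D : ℕ) (S : ℕ → Prop) (N : ℕ) : #(hitBlocks D S N) ≤ N := by
  classical
  exact (card_filter_le _ _).trans (card_range N).le

lemma div_mul_le_and_lt_succ_mul {D : ℕ} (hD : 0 < D) (i : ℕ) :
    i / D * D ≤ i ∧ i < (i / D + 1) * D :=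
  ⟨Nat.div_mul_le_self i D, by rw [add_one_mul]; exact Nat.lt_div_mul_add hD⟩

lemma card_le_of_forall_mul_lt_mul_add {F : Finset ℕ} {D W : ℕ} (hD : 0 < D)
    (h : ∀ k₁ ∈ F, ∀ k₂ ∈ F, k₁ * D < k₂ * D + W) : #F ≤ (W + D - 1) / D := by
  rcases F.eq_empty_or_nonempty with rfl | hF
  · simp
  obtain ⟨k₀, hk₀F, hk₀⟩ : ∃ k₀ ∈ F, ∀ k ∈ F, k₀ ≤ k :=
    ⟨F.min' hF, F.min'_mem hF, fun k hk => F.min'_le k hk⟩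
  calc #F ≤ #(Ico k₀ (k₀ + (W + D - 1) / D)) := card_le_card fun k hk => ?_
    _ = (W + D - 1) / D := by simp
  have hk₀k := hk₀ k hk
  have hr : (k - k₀) * D < W := by
    have := h k hk k₀ hk₀F
    have := Nat.mul_le_mul_right D hk₀k
    rw [Nat.sub_mul]
    omega
  have : k - k₀ < (W + D - 1) / D := by
    rw [← Nat.add_one_le_iff, Nat.le_div_iff_mul_le hD, add_one_mul]
    omega
  rw [mem_Ico]
  omega

lemma strictMono_add_mul_div {p s D : ℕ} (hD : 0 < D) (hs : D ≤ s) :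
    StrictMono fun t => (p + t * s) / D := by
  refine strictMono_nat_of_lt_succ fun t => ?_
  calc (p + t * s) / D < (p + t * s) / D + 1 := lt_add_one _
    _ = (p + t * s + D) / D := (Nat.add_div_right _ hD).symm
    _ ≤ (p + (t + 1) * s) / D := Nat.div_le_div_right (by rw [add_one_mul]; omega)

def Linked (D E δ : ℕ) (S T : ℕ → Prop) (k j : ℕ) : Prop :=
  ∃ i p, S i ∧ T p ∧ p ≤ i ∧ i ≤ p + δ ∧
    k * D ≤ i ∧ i < (k + 1) * D ∧ j * E ≤ p ∧ p < (j + 1) * E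

namespace Linked

variable {D E δ : ℕ} {S T : ℕ → Prop}

lemma left_spread {k₁ k₂ j : ℕ} (h₁ : Linked D E δ S T k₁ j) (h₂ : Linked D E δ S T k₂ j) :
    k₁ * D < k₂ * D + (D + E + δ) := by
  obtain ⟨i₁, p₁, -, -, -, hip₁, hki₁, -, -, hpj₁⟩ := h₁
  obtain ⟨i₂, p₂, -, -, hpi₂, -, -, hik₂, hjp₂, -⟩ := h₂
  rw [add_one_mul] at hpj₁ hik₂
  omega

lemma right_spread {k j₁ j₂ : ℕ} (h₁ : Linked D E δ S T k j₁) (h₂ : Linked D E δ S T k j₂) :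
    j₁ * E < j₂ * E + (D + E + δ) := by
  obtain ⟨i₁, p₁, -, -, hpi₁, -, -, hik₁, hjp₁, -⟩ := h₁
  obtain ⟨i₂, p₂, -, -, -, hip₂, hki₂, -, -, hpj₂⟩ := h₂
  rw [add_one_mul] at hik₁ hpj₂
  omega

end Linked

section BlockCounting

variable {D E δ : ℕ} {S T : ℕ → Prop}

lemma card_hitBlocks_le_of_cover (hD : 0 < D) (hE : 0 < E)
    (hcover : ∀ i, S i → ∃ p, T p ∧ p ≤ i ∧ i ≤ p + δ) (N : ℕ) :
    #(hitBlocks D S N) ≤ #(hitBlocks E T (N * D / E + 1)) * ((2 * D + E + δ - 1) / D) := by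
  classical
  rw [← mul_one #(hitBlocks D S N)]
  refine card_mul_le_card_mul (Linked D E δ S T) ?_ fun j _ => ?_
  · intro k hk
    simp only [hitBlocks, mem_filter, mem_range] at hk
    obtain ⟨hkN, i, hki, hik, hi⟩ := hk
    obtain ⟨p, hp, hpi, hip⟩ := hcover i hi
    obtain ⟨hjp, hpj⟩ := div_mul_le_and_lt_succ_mul hE p
    have hiN : i < N * D := hik.trans_le (Nat.mul_le_mul_right D hkN)
    refine card_pos.mpr ⟨p / E, ?_⟩
    simp only [bipartiteAbove, hitBlocks, mem_filter, mem_range]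
    refine ⟨⟨Nat.lt_add_one_iff.mpr (Nat.div_le_div_right (by omega)), p, hjp, hpj, hp⟩,
      i, p, hi, hp, hpi, hip, hki, hik, hjp, hpj⟩
  · refine (card_le_of_forall_mul_lt_mul_add hD fun k₁ hk₁ k₂ hk₂ =>
      Linked.left_spread (mem_filter.mp hk₁).2 (mem_filter.mp hk₂).2).trans_eq ?_
    congr 1
    omega

lemma card_hitBlocks_mul_le_of_progression {s n : ℕ} (hD : 0 < D) (hs : D ≤ s)
    (hE : D + n * s ≤ E) (hprog : ∀ p, T p → ∀ t ≤ n, S (p + t * s)) (N : ℕ) :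
    #(hitBlocks E T N) * (n + 1) ≤ #(hitBlocks D S ((N * E + n * s) / D + 1)) * 2 := by
  classical
  refine card_mul_le_card_mul (fun j k => Linked D E (n * s) S T k j) ?_ fun k _ => ?_
  · intro j hj
    simp only [hitBlocks, mem_filter, mem_range] at hj
    obtain ⟨hjN, p, hjp, hpj, hp⟩ := hj
    have hpN : p < N * E := hpj.trans_le (Nat.mul_le_mul_right E hjN)
    calc n + 1 = #((range (n + 1)).image fun t => (p + t * s) / D) := by
          rw [card_image_of_injective _ (strictMono_add_mul_div hD hs).injective, card_range]
      _ ≤ _ := card_le_card fun k hk => ?_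
    simp only [mem_image, mem_range, Nat.lt_add_one_iff] at hk
    obtain ⟨t, htn, rfl⟩ := hk
    have hts : t * s ≤ n * s := Nat.mul_le_mul_right s htn
    obtain ⟨hki, hik⟩ := div_mul_le_and_lt_succ_mul hD (p + t * s)
    simp only [bipartiteAbove, hitBlocks, mem_filter, mem_range]
    exact ⟨⟨Nat.lt_add_one_iff.mpr (Nat.div_le_div_right (by omega)), _, hki, hik,
      hprog p hp t htn⟩, _, p, hprog p hp t htn, hp, by omega, by omega, hki, hik, hjp, hpj⟩
  · have hE₀ : 0 < E := by omega
    refine (card_le_of_forall_mul_lt_mul_add (W := D + E + n * s) hE₀ fun j₁ hj₁ j₂ hj₂ =>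
      Linked.right_spread (mem_filter.mp hj₁).2 (mem_filter.mp hj₂).2).trans ?_
    -- the window `D + E + n * s` is shorter than `3 * E`
    exact Nat.lt_add_one_iff.mp ((Nat.div_lt_iff_lt_mul hE₀).mpr (by omega))

end BlockCounting

lemma isBoundedUnder_le_div_of_le {w : ℕ → ℕ} (hw : ∀ N, w N ≤ N) :
    IsBoundedUnder (· ≤ ·) atTop fun N => (w N : ℝ) / N :=
  isBoundedUnder_of ⟨1, fun N => div_le_one_of_le₀ (by exact_mod_cast hw N) N.cast_nonneg⟩

lemma limsup_div_nonneg_of_le {w : ℕ → ℕ} (hw : ∀ N, w N ≤ N) :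
    0 ≤ limsup (fun N => (w N : ℝ) / N) atTop :=
  le_limsup_of_frequently_le (Frequently.of_forall fun N => by positivity)
    (isBoundedUnder_le_div_of_le hw)

lemma limsup_div_le_of_count {u w M : ℕ → ℕ} {c k α β C : ℝ} (hc : 0 < c) (hk : 0 ≤ k)
    (hC : k * α ≤ C * c) (hw : ∀ N, w N ≤ N) (hM : Tendsto M atTop atTop)
    (hMle : ∀ N, (M N : ℝ) ≤ α * N + β) (hcount : ∀ N, c * u N ≤ k * w (M N)) :
    limsup (fun N => (u N : ℝ) / N) atTop ≤ C * limsup (fun N => (w N : ℝ) / N) atTop := by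
  set Λ := limsup (fun N => (w N : ℝ) / N) atTop
  have hΛ : 0 ≤ Λ := limsup_div_nonneg_of_le hw
  have hbound :
      ∀ ε > 0, limsup (fun N => (u N : ℝ) / N) atTop ≤ k / c * ((Λ + ε) * (α + ε)) := by
    intro ε hε
    have hw_eventually : ∀ᶠ N in atTop, (w (M N) : ℝ) / M N < Λ + ε :=
      hM.eventually (eventually_lt_of_limsup_lt (lt_add_of_pos_right Λ hε)
        (isBoundedUnder_le_div_of_le hw))
    refine limsup_le_of_le (isCoboundedUnder_le_of_le atTop fun N => by positivity) ?_
    filter_upwards [hw_eventually, eventually_ge_atTop ⌈β / ε⌉₊, eventually_ge_atTop 1]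
      with N hwN hβN hN
    have hN : (0 : ℝ) < N := by exact_mod_cast hN
    have hβ : β ≤ ε * N := by
      rw [← div_le_iff₀' hε]; exact (Nat.le_ceil _).trans (by exact_mod_cast hβN)
    have hwM : (w (M N) : ℝ) ≤ (Λ + ε) * M N := by
      rcases Nat.eq_zero_or_pos (M N) with h0 | hpos
      · simp [h0, Nat.le_zero.mp (h0 ▸ hw (M N))]
      · exact (div_le_iff₀ (by exact_mod_cast hpos)).mp hwN.le
    rw [div_le_iff₀ hN, ← mul_le_mul_iff_of_pos_left hc]
    calc c * u N ≤ k * w (M N) := hcount N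
      _ ≤ k * ((Λ + ε) * (α * N + β)) := by
          gcongr; exact hwM.trans (mul_le_mul_of_nonneg_left (hMle N) (by positivity))
      _ ≤ k * ((Λ + ε) * ((α + ε) * N)) := by gcongr; linarith
      _ = c * (k / c * ((Λ + ε) * (α + ε)) * N) := by field_simp
  have hlim : Tendsto (fun ε => k / c * ((Λ + ε) * (α + ε))) (𝓝[>] 0) (𝓝 (k / c * (Λ * α))) := by
    refine tendsto_nhdsWithin_of_tendsto_nhds ?_
    have : Continuous fun ε : ℝ => k / c * ((Λ + ε) * (α + ε)) := by fun_prop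
    simpa using this.tendsto 0
  calc limsup (fun N => (u N : ℝ) / N) atTop ≤ k / c * (Λ * α) :=
        ge_of_tendsto hlim (eventually_nhdsWithin_of_forall hbound)
    _ = k * α / c * Λ := by ring
    _ ≤ C * Λ := by gcongr; rwa [div_le_iff₀ hc]

lemma densD_nonneg {A : Type*} (L : ℕ) (w : List A) (x : ℕ → A) : 0 ≤ densD L w x := by
  rw [densD_eq_limsup_card_hitBlocks]
  exact limsup_div_nonneg_of_le (card_hitBlocks_le _ _)

section Density

variable {D E δ : ℕ} {S T : ℕ → Prop}

lemma limsup_card_hitBlocks_le_of_cover (hD : 0 < D) (hE : 0 < E)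
    (hcover : ∀ i, S i → ∃ p, T p ∧ p ≤ i ∧ i ≤ p + δ) {C : ℝ}
    (hC : (2 * D + E + δ : ℝ) ≤ C * E) :
    limsup (fun N => (#(hitBlocks D S N) : ℝ) / N) atTop ≤
      C * limsup (fun N => (#(hitBlocks E T N) : ℝ) / N) atTop := by
  have hM : Tendsto (fun N => N * D / E + 1) atTop atTop :=
    tendsto_atTop_mono (fun N => (Nat.div_le_div_right (Nat.le_mul_of_pos_right N hD)).trans
      (Nat.le_succ _)) (Nat.tendsto_div_const_atTop hE.ne')
  refine limsup_div_le_of_count (c := 1) (k := ((2 * D + E + δ - 1) / D : ℕ)) (α := D / E)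
    (β := 1) one_pos (Nat.cast_nonneg _) ?_ (card_hitBlocks_le E T) hM
    (fun N => ?_) fun N => ?_
  · have hk : (((2 * D + E + δ - 1) / D : ℕ) : ℝ) * D ≤ 2 * D + E + δ := by
      exact_mod_cast (Nat.div_mul_le_self _ _).trans (Nat.sub_le _ _)
    rw [mul_one, ← mul_div_assoc, div_le_iff₀ (by positivity)]
    linarith
  · push_cast
    gcongr
    exact Nat.cast_div_le.trans_eq (by push_cast; ring)
  · rw [one_mul]
    exact_mod_cast (card_hitBlocks_le_of_cover hD hE hcover N).trans_eq (mul_comm _ _)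

lemma limsup_card_hitBlocks_le_of_progression {s n : ℕ} (hD : 0 < D) (hs : D ≤ s)
    (hE : D + n * s ≤ E) (hprog : ∀ p, T p → ∀ t ≤ n, S (p + t * s)) {C : ℝ}
    (hC : 2 * (E : ℝ) ≤ C * (n + 1) * D) :
    limsup (fun N => (#(hitBlocks E T N) : ℝ) / N) atTop ≤
      C * limsup (fun N => (#(hitBlocks D S N) : ℝ) / N) atTop := by
  have hM : Tendsto (fun N => (N * E + n * s) / D + 1) atTop atTop :=
    tendsto_atTop_mono (fun N => (Nat.div_le_div_right
      ((Nat.le_mul_of_pos_right N (by omega)).trans (Nat.le_add_right _ _))).trans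
      (Nat.le_succ _)) (Nat.tendsto_div_const_atTop hD.ne')
  refine limsup_div_le_of_count (c := n + 1) (k := 2) (α := E / D) (β := n * s / D + 1)
    (by positivity) zero_le_two ?_ (card_hitBlocks_le D S) hM
    (fun N => ?_) fun N => ?_
  · rw [← mul_div_assoc, div_le_iff₀ (by positivity)]
    linarith
  · push_cast
    rw [← add_assoc]
    gcongr
    exact Nat.cast_div_le.trans_eq (by push_cast; ring)
  · exact_mod_cast (mul_comm _ _).trans_le
      ((card_hitBlocks_mul_le_of_progression hD hs hE hprog N).trans_eq (mul_comm _ _))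

end Density

lemma add_one_mul_le_div_add_one_mul_add (a b D : ℕ) :
    (b + 1) * a ≤ (b / (D / a + 1) + 1) * (D + a) := by
  set q := D / a + 1
  calc (b + 1) * a ≤ q * (b / q + 1) * a :=
        Nat.mul_le_mul_right a (Nat.lt_mul_div_succ b (Nat.succ_pos _))
    _ = (b / q + 1) * (q * a) := by ring
    _ ≤ (b / q + 1) * (D + a) := by
        gcongr
        rw [add_one_mul]
        exact Nat.add_le_add_right (Nat.div_mul_le_self _ _) a

section Words

variable {A : Type*} {v w : List A} {x : ℕ → A} {L : ℕ}

lemma densD_le_four_mul_densD_of_contained (hL : 0 < L) (hv : 0 < v.length)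
    (hvw : v.length ≤ w.length)
    (hcont : ∀ p, occursAt x v p →
      ∃ p', p' ≤ p ∧ p + v.length ≤ p' + w.length ∧ occursAt x w p') :
    densD L v x ≤ 4 * densD L w x := by
  simp only [densD_eq_limsup_card_hitBlocks]
  refine limsup_card_hitBlocks_le_of_cover (δ := w.length - v.length) (Nat.mul_pos hL hv)
    (Nat.mul_pos hL (hv.trans_le hvw)) (fun i hi => ?_) ?_
  · obtain ⟨p, hpi, hip, hp⟩ := hcont i hi
    exact ⟨p, hp, hpi, by omega⟩
  · have := Nat.mul_le_mul_left L hvw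
    have := Nat.le_mul_of_pos_left w.length hL
    exact_mod_cast (show 2 * (L * v.length) + L * w.length + (w.length - v.length) ≤
      4 * (L * w.length) by omega)

lemma densD_le_mul_densD_of_progression {a b : ℕ} (ha : 0 < a) (hL : 0 < L)
    (hv : 0 < v.length) (hlen : w.length = v.length + a * b)
    (hpos : ∀ j, j ≤ b → ((w.drop (j * a)).take v.length) = v) :
    densD L w x ≤ (4 * L + 8 * (a : ℝ) / v.length) * densD L v x := by
  -- Keep every `q`-th copy of `v`: with step `q * a ≥ L * |v|` they lie in distinct blocks.
  set q := L * v.length / a + 1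
  have hqa : L * v.length ≤ q * a :=
    (Nat.lt_div_mul_add ha).le.trans_eq (add_one_mul _ _).symm
  have hspan : b / q * (q * a) ≤ a * b := by
    rw [← mul_assoc, mul_comm a b]; exact Nat.mul_le_mul_right a (Nat.div_mul_le_self b q)
  have hprog : ∀ p, occursAt x w p → ∀ t ≤ b / q, occursAt x v (p + t * (q * a)) := by
    intro p hp t ht
    have htq : t * q ≤ b := (Nat.le_div_iff_mul_le (Nat.succ_pos _)).mp ht
    have := Nat.mul_le_mul_right a htq
    rw [← mul_assoc]
    exact occursAt_add_of_take_drop (by rw [hlen, mul_comm a b]; omega) (hpos _ htq) hp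
  have hrate : 2 * w.length ≤ (4 * (L * v.length) + 8 * a) * (b / q + 1) := by
    have : (b + 1) * a ≤ (b / q + 1) * (L * v.length + a) :=
      add_one_mul_le_div_add_one_mul_add a b (L * v.length)
    have : v.length ≤ L * v.length := Nat.le_mul_of_pos_left v.length hL
    have : L * v.length ≤ L * v.length * (b / q + 1) :=
      Nat.le_mul_of_pos_right _ (Nat.succ_pos _)
    rw [hlen]
    nlinarith
  simp only [densD_eq_limsup_card_hitBlocks]
  refine limsup_card_hitBlocks_le_of_progression (Nat.mul_pos hL hv) hqa ?_ hprog ?_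
  · have := Nat.le_mul_of_pos_left (a * b) hL
    rw [hlen, mul_add]
    omega
  · have hvR : (0 : ℝ) < v.length := by exact_mod_cast hv
    have hC : (4 * L + 8 * (a : ℝ) / v.length) * ((b / q : ℕ) + 1) * (L * v.length : ℕ) =
        L * ((4 * (L * v.length) + 8 * a) * (b / q + 1) : ℕ) := by
      push_cast
      field_simp
    rw [hC]
    exact_mod_cast (Nat.mul_le_mul_left L hrate).trans_eq' (by ring)

end Words

theorem densD_loop_general {A : Type*} (v tv : List A) (x : ℕ → A) (a b L : ℕ)
    (ha : 0 < a) (hL : 0 < L) (hv : 0 < v.length)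
    (hlen : tv.length = v.length + a * b)
    (hpos : ∀ j, j ≤ b → ((tv.drop (j * a)).take v.length) = v)
    (hcont : ∀ p, occursAt x v p →
      ∃ p', p' ≤ p ∧ p + v.length ≤ p' + tv.length ∧ occursAt x tv p') :
    densD L tv x / (4 * L + 8 * (a : ℝ) / v.length) ≤ densD L v x ∧
      (1 / 27 : ℝ) * densD L v x ≤ densD L tv x := by
  constructor
  · rw [div_le_iff₀ (by positivity), mul_comm]
    exact densD_le_mul_densD_of_progression ha hL hv hlen hpos
  · have := densD_le_four_mul_densD_of_contained hL hv (by omega) hcont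
    have := densD_nonneg L tv x
    linarith

/-- nested-occurrence density lemma. If `|ṽ| = |v| + ab`, `v`
begins at positions `ja` (`j = 0,…,b`) in `ṽ`, and every occurrence of `v` in
`x` is contained in an occurrence of `ṽ`, then
`D_L(v,x) ≥ D_L(ṽ,x)/(4L + 8a/|v|)` and `D_L(ṽ,x) ≥ D_L(v,x)/27`. -/
theorem densD_loop {A : Type*} (v tv : List A) (x : ℕ → A) (a b L : ℕ)
    (ha : 0 < a) (hb : 0 < b) (hL : 0 < L) (hv : 0 < v.length)
    (hlen : tv.length = v.length + a * b)
    (hpos : ∀ j, j ≤ b → ((tv.drop (j * a)).take v.length) = v)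
    (hcont : ∀ p, occursAt x v p →
      ∃ p', p' ≤ p ∧ p + v.length ≤ p' + tv.length ∧ occursAt x tv p') :
    densD L tv x / (4 * L + 8 * (a : ℝ) / v.length) ≤ densD L v x ∧
      (1 / 27 : ℝ) * densD L v x ≤ densD L tv x :=
  densD_loop_general v tv x a b L ha hL hv hlen hpos hcont
end

section
/- Let Ω be an aperiodic minimal shift whose complexity satisfies p(n) = Kn + C for all n ≥ n₀. Then for all sufficiently large n, the distance from n to the next length admitting a bispecial word satisfies B_n − n < (K+1)·n, where B_n = min{n' ≥ n : L(n') contains a bispecial word}. -/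
open Set

/-- The one-sided shift map on sequences. -/
def shiftMap {A : Type*} (x : ℕ → A) : ℕ → A := fun n => x (n + 1)

/-- A subshift: a closed, shift-invariant subset of `ℕ → A`. -/
def IsSubshift {A : Type*} [TopologicalSpace A] (Ω : Set (ℕ → A)) : Prop :=
  IsClosed Ω ∧ ∀ x ∈ Ω, shiftMap x ∈ Ω

/-- A minimal subshift: a nonempty subshift with no proper nonempty subshift. -/
def IsMinimalSubshift {A : Type*} [TopologicalSpace A] (Ω : Set (ℕ → A)) : Prop :=
  IsSubshift Ω ∧ Ω.Nonempty ∧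
    ∀ Ω' ⊆ Ω, Ω'.Nonempty → IsClosed Ω' → (∀ x ∈ Ω', shiftMap x ∈ Ω') → Ω' = Ω

/-- Aperiodicity: no point of `Ω` is periodic. -/
def IsAperiodic {A : Type*} (Ω : Set (ℕ → A)) : Prop :=
  ∀ x ∈ Ω, ∀ p, 0 < p → ∃ n, x (n + p) ≠ x n

/-- The language of a shift: all finite words occurring in points of `Ω`. -/
def language {A : Type*} (Ω : Set (ℕ → A)) : Set (List A) :=
  {w | ∃ x ∈ Ω, ∃ i, occursAt x w i}

/-- Words of length `n` in the language of `Ω`. -/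
def Lang {A : Type*} (Ω : Set (ℕ → A)) (n : ℕ) : Set (List A) :=
  {w | w ∈ language Ω ∧ w.length = n}

/-- The complexity function `p(n)`. -/
noncomputable def complexity {A : Type*} (Ω : Set (ℕ → A)) (n : ℕ) : ℕ :=
  (Lang Ω n).ncard

/-- Right extensions of `w`: words of length `|w|+1` in the language with prefix `w`. -/
def rightExt {A : Type*} (Ω : Set (ℕ → A)) (w : List A) : Set (List A) :=
  {w' | w' ∈ Lang Ω (w.length + 1) ∧ w <+: w'}

/-- Left extensions of `w`: words of length `|w|+1` in the language with suffix `w`. -/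
def leftExt {A : Type*} (Ω : Set (ℕ → A)) (w : List A) : Set (List A) :=
  {w' | w' ∈ Lang Ω (w.length + 1) ∧ w <:+ w'}

/-- `s`-sided extensions: `true` = right, `false` = left. -/
def ext {A : Type*} (Ω : Set (ℕ → A)) (s : Bool) (w : List A) : Set (List A) :=
  if s then rightExt Ω w else leftExt Ω w

/-- `ψ_s(n)`: the maximal number of `s`-extensions over words of length `n`. -/
noncomputable def psi {A : Type*} (Ω : Set (ℕ → A)) (s : Bool) (n : ℕ) : ℕ :=
  sSup ((fun w => (ext Ω s w).ncard) '' Lang Ω n)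

/-- `s`-special words of length `n`: those with at least two `s`-extensions. -/
def specialWords {A : Type*} (Ω : Set (ℕ → A)) (s : Bool) (n : ℕ) : Set (List A) :=
  {w | w ∈ Lang Ω n ∧ 2 ≤ (ext Ω s w).ncard}

/-- A bispecial word: both left special and right special. -/
def IsBispecial {A : Type*} (Ω : Set (ℕ → A)) (w : List A) : Prop :=
  2 ≤ (leftExt Ω w).ncard ∧ 2 ≤ (rightExt Ω w).ncard

/-- Two-sided extensions of `w`: words of length `|w|+2` with middle factor `w`. -/
def twoSidedExt {A : Type*} (Ω : Set (ℕ → A)) (w : List A) : Set (List A) :=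
  {w'' | w'' ∈ Lang Ω (w.length + 2) ∧ ((w''.drop 1).take w.length) = w}

set_option linter.unusedSectionVars false

/-! ### auxiliary: windows -/

/-- The window of `x` of length `n` starting at `i`. -/
def word {A : Type*} (x : ℕ → A) (i n : ℕ) : List A :=
  List.ofFn fun k : Fin n => x (i + k)

namespace NBB

variable {A : Type*} (x : ℕ → A)

@[simp] lemma length_word (i n : ℕ) : (word x i n).length = n := by
  simp [word]

lemma getElem?_word (i n k : ℕ) (hk : k < n) : (word x i n)[k]? = some (x (i + k)) := by
  simp [word, List.getElem?_ofFn, List.ofFnNthVal, hk]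

lemma occursAt_word (i n : ℕ) : occursAt x (word x i n) i := by
  intro k hk
  rw [length_word] at hk
  exact getElem?_word x i n k hk

lemma occursAt_eq_word {w : List A} {i : ℕ} (h : occursAt x w i) :
    w = word x i w.length := by
  apply List.ext_getElem?
  intro k
  by_cases hk : k < w.length
  · rw [h k hk, getElem?_word x i _ k hk]
  · rw [List.getElem?_eq_none (by omega), List.getElem?_eq_none (by simp; omega)]

lemma word_mem_language {Ω : Set (ℕ → A)} (hx : x ∈ Ω) (i n : ℕ) :
    word x i n ∈ language Ω :=
  ⟨x, hx, i, occursAt_word x i n⟩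

lemma word_mem_Lang {Ω : Set (ℕ → A)} (hx : x ∈ Ω) (i n : ℕ) :
    word x i n ∈ Lang Ω n :=
  ⟨word_mem_language x hx i n, length_word x i n⟩

lemma mem_language_iff {Ω : Set (ℕ → A)} {w : List A} :
    w ∈ language Ω ↔ ∃ x ∈ Ω, ∃ i, w = word x i w.length := by
  constructor
  · rintro ⟨x, hx, i, h⟩
    exact ⟨x, hx, i, occursAt_eq_word x h⟩
  · rintro ⟨x, hx, i, h⟩
    exact ⟨x, hx, i, h ▸ occursAt_word x i w.length⟩

lemma word_drop (i n m : ℕ) : (word x i n).drop m = word x (i + m) (n - m) := by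
  apply List.ext_getElem?
  intro k
  rw [List.getElem?_drop]
  by_cases hk : k < n - m
  · rw [getElem?_word x i n (m + k) (by omega), getElem?_word x (i + m) (n - m) k hk]
    ring_nf
  · rw [List.getElem?_eq_none (by simp; omega), List.getElem?_eq_none (by simp; omega)]

lemma word_take (i n m : ℕ) (hm : m ≤ n) : (word x i n).take m = word x i m := by
  apply List.ext_getElem?
  intro k
  rw [List.getElem?_take]
  by_cases hk : k < m
  · rw [if_pos hk, getElem?_word x i n k (by omega), getElem?_word x i m k hk]
  · rw [if_neg hk, List.getElem?_eq_none (by simp; omega)]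

lemma word_succ_last (i n : ℕ) : word x i (n + 1) = word x i n ++ [x (i + n)] := by
  apply List.ext_getElem?
  intro k
  by_cases hk : k < n
  · rw [getElem?_word x i (n+1) k (by omega), List.getElem?_append, if_pos (by simp [hk]),
      getElem?_word x i n k hk]
  · by_cases hk' : k = n
    · rw [getElem?_word x i (n+1) k (by omega), List.getElem?_append, if_neg (by simp [hk'])]
      simp [hk']
    · rw [List.getElem?_eq_none (by simp; omega), List.getElem?_eq_none (by simp; omega)]

lemma word_succ_head (i n : ℕ) : word x i (n + 1) = x i :: word x (i + 1) n := by
  apply List.ext_getElem?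
  intro k
  match k with
  | 0 => rw [getElem?_word x i (n+1) 0 (by omega)]; simp
  | (k+1) =>
    by_cases hk : k < n
    · rw [getElem?_word x i (n+1) (k+1) (by omega)]
      simp only [List.getElem?_cons_succ]
      rw [getElem?_word x (i+1) n k hk]
      ring_nf
    · rw [List.getElem?_eq_none (by simp; omega), List.getElem?_eq_none (by simp; omega)]

lemma word_apply_eq {a b n : ℕ} (h : word x a n = word x b n) {k : ℕ} (hk : k < n) :
    x (a + k) = x (b + k) := by
  have := congrArg (fun l => l[k]?) h
  rw [getElem?_word x a n k hk, getElem?_word x b n k hk] at this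
  exact Option.some_injective _ this

end NBB

open NBB

namespace NBB

section Two
variable {A : Type*} [Fintype A]

lemma lang_finite (Ω : Set (ℕ → A)) (n : ℕ) : (Lang Ω n).Finite :=
  (List.finite_length_eq A n).subset fun _ hw => hw.2

lemma leftExt_finite (Ω : Set (ℕ → A)) (w : List A) : (leftExt Ω w).Finite :=
  (lang_finite Ω (w.length + 1)).subset fun _ hW => hW.1

lemma rightExt_finite (Ω : Set (ℕ → A)) (w : List A) : (rightExt Ω w).Finite :=
  (lang_finite Ω (w.length + 1)).subset fun _ hW => hW.1

end Two

section Card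
variable {α : Type*} {s : Set α} {a b : α}

lemma two_le_ncard_of (hs : s.Finite) (ha : a ∈ s) (hb : b ∈ s) (hab : a ≠ b) :
    2 ≤ s.ncard := by
  have hsub : ({a, b} : Set α) ⊆ s := by
    rintro c (rfl | rfl) <;> assumption
  have := Set.ncard_le_ncard hsub hs
  rwa [Set.ncard_pair hab] at this

lemma eq_of_not_two_le (hs : s.Finite) (h : ¬ 2 ≤ s.ncard) (ha : a ∈ s) (hb : b ∈ s) :
    a = b :=
  (Set.ncard_le_one hs).mp (by omega) a ha b hb

lemma exists_pair_of_two_le (hs : s.Finite) (h : 2 ≤ s.ncard) :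
    ∃ a ∈ s, ∃ b ∈ s, a ≠ b :=
  (Set.one_lt_ncard hs).mp (by omega)

end Card

section Ext
variable {A : Type*} {Ω : Set (ℕ → A)}

lemma leftExt_elem {W w : List A} (hW : W ∈ leftExt Ω w) : ∃ a, W = a :: w := by
  obtain ⟨⟨_, hlen⟩, t, ht⟩ := hW
  have h1 : t.length = 1 := by
    have := congrArg List.length ht
    simp at this; omega
  obtain ⟨a, rfl⟩ := List.length_eq_one_iff.mp h1
  exact ⟨a, ht.symm⟩

lemma rightExt_elem {W w : List A} (hW : W ∈ rightExt Ω w) : ∃ a, W = w ++ [a] := by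
  obtain ⟨⟨_, hlen⟩, t, ht⟩ := hW
  have h1 : t.length = 1 := by
    have := congrArg List.length ht
    simp at this; omega
  obtain ⟨a, rfl⟩ := List.length_eq_one_iff.mp h1
  exact ⟨a, ht.symm⟩

lemma cons_mem_leftExt {w : List A} {a : A} (h : a :: w ∈ language Ω) :
    a :: w ∈ leftExt Ω w :=
  ⟨⟨h, by simp⟩, List.suffix_cons a w⟩

lemma append_mem_rightExt {w : List A} {a : A} (h : w ++ [a] ∈ language Ω) :
    w ++ [a] ∈ rightExt Ω w :=
  ⟨⟨h, by simp⟩, List.prefix_append w [a]⟩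

lemma drop_mem_language {w : List A} (h : w ∈ language Ω) (m : ℕ) :
    w.drop m ∈ language Ω := by
  obtain ⟨x, hx, i, hw⟩ := mem_language_iff.mp h
  rw [hw, word_drop]
  exact word_mem_language x hx _ _

lemma take_mem_language {w : List A} (h : w ∈ language Ω) {m : ℕ} (hm : m ≤ w.length) :
    w.take m ∈ language Ω := by
  obtain ⟨x, hx, i, hw⟩ := mem_language_iff.mp h
  rw [hw, word_take x i _ m hm]
  exact word_mem_language x hx _ _

end Ext

section Shift
variable {A : Type*} {Ω : Set (ℕ → A)}

lemma shift_iter_apply (x : ℕ → A) (m k : ℕ) : (shiftMap^[m] x) k = x (k + m) := by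
  induction m generalizing k with
  | zero => rfl
  | succ m ih =>
    rw [Function.iterate_succ_apply']
    show (shiftMap^[m] x) (k + 1) = x (k + (m + 1))
    rw [ih (k + 1)]
    congr 1; omega

lemma shift_iter_mem [TopologicalSpace A] (hsub : IsSubshift Ω) {x : ℕ → A} (hx : x ∈ Ω)
    (m : ℕ) : shiftMap^[m] x ∈ Ω := by
  induction m with
  | zero => exact hx
  | succ m ih => rw [Function.iterate_succ_apply']; exact hsub.2 _ ih

end Shift
end NBB

namespace NBB

section Min
variable {A : Type*} [TopologicalSpace A] [DiscreteTopology A] {Ω : Set (ℕ → A)}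

lemma continuous_shiftMap : Continuous (shiftMap : (ℕ → A) → (ℕ → A)) :=
  continuous_pi fun n => continuous_apply (n + 1)

/-- In a minimal subshift, every word of the language has a left extension. -/
lemma exists_cons_mem (hmin : IsMinimalSubshift Ω) {w : List A}
    (hw : w ∈ language Ω) : ∃ a, a :: w ∈ language Ω := by
  obtain ⟨x₀, hx₀⟩ := hmin.2.1
  set S : Set (ℕ → A) := Set.range (fun m : ℕ => shiftMap^[m + 1] x₀) with hS
  have hSΩ : S ⊆ Ω := by
    rintro _ ⟨m, rfl⟩
    exact shift_iter_mem hmin.1 hx₀ (m + 1)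
  have hclos_sub : closure S ⊆ Ω := closure_minimal hSΩ hmin.1.1
  have hne : (closure S).Nonempty := ⟨_, subset_closure ⟨0, rfl⟩⟩
  have hinv : ∀ y ∈ closure S, shiftMap y ∈ closure S := by
    intro y hy
    have h1 : shiftMap y ∈ shiftMap '' closure S := ⟨y, hy, rfl⟩
    have h2 : shiftMap '' closure S ⊆ closure (shiftMap '' S) :=
      image_closure_subset_closure_image continuous_shiftMap
    have h3 : shiftMap '' S ⊆ S := by
      rintro _ ⟨_, ⟨m, rfl⟩, rfl⟩
      refine ⟨m + 1, ?_⟩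
      show shiftMap^[m + 1 + 1] x₀ = shiftMap (shiftMap^[m + 1] x₀)
      rw [Function.iterate_succ_apply']
    exact closure_mono h3 (h2 h1)
  have heq : closure S = Ω := hmin.2.2 _ hclos_sub hne isClosed_closure hinv
  obtain ⟨y, hy, i, hocc⟩ := hw
  have hyS : y ∈ closure S := heq ▸ hy
  have hUopen : IsOpen {z : ℕ → A | ∀ k < i + w.length, z k = y k} := by
    have hset : {z : ℕ → A | ∀ k < i + w.length, z k = y k} =
        ⋂ k : Fin (i + w.length), (fun z : ℕ → A => z (k : ℕ)) ⁻¹' {y (k : ℕ)} := by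
      ext z
      simp only [Set.mem_setOf_eq, Set.mem_iInter, Set.mem_preimage,
        Set.mem_singleton_iff]
      exact ⟨fun h k => h k k.2, fun h k hk => h ⟨k, hk⟩⟩
    rw [hset]
    exact isOpen_iInter_of_finite fun k =>
      (isOpen_discrete _).preimage (continuous_apply (k : ℕ))
  obtain ⟨z, hzU, hzS⟩ := mem_closure_iff.mp hyS _ hUopen (fun k _ => rfl)
  obtain ⟨m, rfl⟩ := hzS
  simp only [Set.mem_setOf_eq] at hzU
  have hocc₀ : occursAt x₀ w (m + 1 + i) := by
    intro k hk
    rw [hocc k hk]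
    have h1 : (shiftMap^[m + 1] x₀) (i + k) = y (i + k) := hzU (i + k) (by omega)
    rw [shift_iter_apply] at h1
    rw [← h1]
    have e : i + k + (m + 1) = m + 1 + i + k := by omega
    rw [e]
  refine ⟨x₀ (m + i), x₀, hx₀, m + i, ?_⟩
  intro k hk
  simp only [List.length_cons] at hk
  match k with
  | 0 => simp
  | (k + 1) =>
    simp only [List.getElem?_cons_succ]
    rw [hocc₀ k (by omega)]
    have e : m + 1 + i + k = m + i + (k + 1) := by omega
    rw [e]

end Min

section Special
variable {A : Type*} [Fintype A] {Ω : Set (ℕ → A)}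

/-- If the complexity strictly increases then a left-special word exists. -/
lemma exists_leftSpecial {n : ℕ} (h : complexity Ω n < complexity Ω (n + 1)) :
    ∃ u ∈ Lang Ω n, 2 ≤ (leftExt Ω u).ncard := by
  by_contra hcon
  push_neg at hcon
  have hinj : Set.InjOn (fun W : List A => W.drop 1) (Lang Ω (n + 1)) := by
    intro W hW W' hW' hWW'
    simp only at hWW'
    have hWlen : W.length = n + 1 := hW.2
    have hW'len : W'.length = n + 1 := hW'.2
    have hmem : W.drop 1 ∈ Lang Ω n := ⟨drop_mem_language hW.1 1, by simp [hWlen]⟩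
    have h1 : W ∈ leftExt Ω (W.drop 1) :=
      ⟨⟨hW.1, by simp [hWlen]⟩, List.drop_suffix 1 W⟩
    have h2 : W' ∈ leftExt Ω (W.drop 1) := by
      rw [hWW']
      exact ⟨⟨hW'.1, by simp [hWW', hW'len]⟩, List.drop_suffix 1 W'⟩
    have h9 := hcon _ hmem
    exact eq_of_not_two_le (leftExt_finite Ω _) (by omega) h1 h2
  have hmaps : ∀ W ∈ Lang Ω (n + 1), W.drop 1 ∈ Lang Ω n := by
    intro W hW
    exact ⟨drop_mem_language hW.1 1, by simp [hW.2]⟩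
  have := Set.ncard_le_ncard_of_injOn _ hmaps hinj (lang_finite Ω n)
  change complexity Ω (n + 1) ≤ complexity Ω n at this
  omega

/-- Determinism: two occurrences of a non-right-special window extend equally. -/
lemma window_step {x x' : ℕ → A} (hx : x ∈ Ω) (hx' : x' ∈ Ω) {j j' n : ℕ}
    (h : word x j n = word x' j' n)
    (hns : ¬ 2 ≤ (rightExt Ω (word x j n)).ncard) :
    word x j (n + 1) = word x' j' (n + 1) := by
  have h1 : word x j (n + 1) ∈ rightExt Ω (word x j n) := by
    rw [word_succ_last]
    exact append_mem_rightExt (by rw [← word_succ_last]; exact word_mem_language x hx j (n+1))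
  have h2 : word x' j' (n + 1) ∈ rightExt Ω (word x j n) := by
    rw [h, word_succ_last]
    exact append_mem_rightExt (by rw [← word_succ_last]; exact word_mem_language x' hx' j' (n+1))
  exact eq_of_not_two_le (rightExt_finite Ω _) hns h1 h2

/-- In an aperiodic shift, every stretch of `p(n)+1` positions contains an
occurrence of a right-special word of length `n`. -/
lemma exists_rightSpecial_window (hap : IsAperiodic Ω) [TopologicalSpace A]
    (hsub : IsSubshift Ω) {x : ℕ → A} (hx : x ∈ Ω) {n : ℕ} (hn : 1 ≤ n) (i : ℕ) :
    ∃ j, i ≤ j ∧ j ≤ i + complexity Ω n ∧ 2 ≤ (rightExt Ω (word x j n)).ncard := by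
  by_contra hcon
  push_neg at hcon
  have hpc : complexity Ω n = (Lang Ω n).ncard := rfl
  -- pigeonhole on windows
  have hfin := lang_finite Ω n
  haveI : Fintype (Lang Ω n) := hfin.fintype
  have hmaps : ∀ j ∈ Finset.Icc i (i + complexity Ω n), word x j n ∈ (Lang Ω n).toFinset := by
    intro j _
    rw [Set.mem_toFinset]
    exact word_mem_Lang x hx j n
  have hcard : (Lang Ω n).toFinset.card < (Finset.Icc i (i + complexity Ω n)).card := by
    rw [Nat.card_Icc, ← Set.ncard_eq_toFinset_card']
    omega
  obtain ⟨j₁, hj₁, j₂, hj₂, hne, heq⟩ :=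
    Finset.exists_ne_map_eq_of_card_lt_of_maps_to hcard hmaps
  rw [Finset.mem_Icc] at hj₁ hj₂
  -- wlog j₁ < j₂
  obtain ⟨j, j', hj, hj', hlt, hww⟩ :
      ∃ j j', (i ≤ j ∧ j ≤ i + complexity Ω n) ∧ (i ≤ j' ∧ j' ≤ i + complexity Ω n) ∧ j < j' ∧
        word x j n = word x j' n := by
    rcases lt_or_gt_of_ne hne with h | h
    · exact ⟨j₁, j₂, hj₁, hj₂, h, heq⟩
    · exact ⟨j₂, j₁, hj₂, hj₁, h, heq.symm⟩
  set d := j' - j with hd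
  have hd0 : 0 < d := by omega
  -- window periodicity
  have key : ∀ m, word x (j + m) n = word x (j + m % d) n := by
    intro m
    induction m with
    | zero => simp
    | succ m ih =>
      set r := m % d with hr
      have hrd : r < d := Nat.mod_lt _ hd0
      have h9 := hcon (j + r) (by omega) (by omega)
      have hns : ¬ 2 ≤ (rightExt Ω (word x (j + r) n)).ncard := by omega
      have hstep : word x (j + r) (n + 1) = word x (j + m) (n + 1) :=
        window_step hx hx ih.symm hns
      have htail : word x (j + m + 1) n = word x (j + r + 1) n := by
        rw [word_succ_head x (j + m) n, word_succ_head x (j + r) n] at hstep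
        have := congrArg List.tail hstep
        simpa using this.symm
      simp only [← Nat.add_assoc]
      rw [htail]
      have hmod : (m + 1) % d = (r + 1) % d := by
        conv_lhs => rw [Nat.add_mod, ← hr]
        rw [Nat.add_mod r 1 d, Nat.mod_mod_of_dvd]
        exact dvd_refl d
      by_cases hcase : r + 1 = d
      · rw [hmod, hcase, Nat.mod_self]
        rw [show j + r + 1 = j' by omega, ← hww]
        simp
      · rw [hmod, Nat.mod_eq_of_lt (by omega), ← Nat.add_assoc]
  -- x is eventually periodic with period d
  have hper : ∀ m, x (j + (m + d)) = x (j + m) := by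
    intro m
    have h1 : word x (j + (m + d)) n = word x (j + m) n := by
      rw [key (m + d), key m, Nat.add_mod_right]
    have := word_apply_eq x h1 (k := 0) (by omega)
    simpa using this
  have hy : shiftMap^[j] x ∈ Ω := shift_iter_mem hsub hx j
  obtain ⟨m, hm⟩ := hap _ hy d hd0
  apply hm
  rw [shift_iter_apply, shift_iter_apply]
  have := hper m
  have e1 : m + d + j = j + (m + d) := by omega
  have e2 : m + j = j + m := by omega
  rw [e1, e2, this]

end Special
end NBB

namespace NBB

section Chain
variable {A : Type*} [Fintype A] [TopologicalSpace A] [DiscreteTopology A] {Ω : Set (ℕ → A)}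

/-- A left-special, non-right-special word extends on the right to a left-special word. -/
lemma leftSpecial_step {w : List A} {a : A} (hL : 2 ≤ (leftExt Ω w).ncard)
    (hR : ¬ 2 ≤ (rightExt Ω w).ncard) (ha : w ++ [a] ∈ language Ω) :
    2 ≤ (leftExt Ω (w ++ [a])).ncard := by
  obtain ⟨W₁, h1, W₂, h2, h12⟩ := exists_pair_of_two_le (leftExt_finite Ω w) hL
  obtain ⟨b₁, rfl⟩ := leftExt_elem h1
  obtain ⟨b₂, rfl⟩ := leftExt_elem h2
  have hbb : b₁ ≠ b₂ := fun h => h12 (by rw [h])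
  have claim : ∀ b, b :: w ∈ language Ω → b :: (w ++ [a]) ∈ language Ω := by
    intro b hb
    obtain ⟨x, hx, i, hw⟩ := mem_language_iff.mp hb
    have hlen : (b :: w).length = w.length + 1 := by simp
    rw [hlen] at hw
    have hext : word x i (w.length + 1 + 1) ∈ language Ω :=
      word_mem_language x hx i (w.length + 1 + 1)
    rw [word_succ_last, ← hw] at hext
    have hwc : w ++ [x (i + (w.length + 1))] ∈ language Ω := by
      have := drop_mem_language hext 1
      simpa using this
    have hmem1 : w ++ [x (i + (w.length + 1))] ∈ rightExt Ω w := append_mem_rightExt hwc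
    have hmem2 : w ++ [a] ∈ rightExt Ω w := append_mem_rightExt ha
    have heq : w ++ [a] = w ++ [x (i + (w.length + 1))] :=
      eq_of_not_two_le (rightExt_finite Ω w) hR hmem2 hmem1
    have hca : a = x (i + (w.length + 1)) := by
      have := List.append_cancel_left heq
      simpa using this
    rw [List.cons_append] at hext
    rw [← hca] at hext
    exact hext
  have m1 : b₁ :: (w ++ [a]) ∈ leftExt Ω (w ++ [a]) := cons_mem_leftExt (claim b₁ h1.1.1)
  have m2 : b₂ :: (w ++ [a]) ∈ leftExt Ω (w ++ [a]) := cons_mem_leftExt (claim b₂ h2.1.1)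
  refine two_le_ncard_of (leftExt_finite Ω _) m1 m2 ?_
  intro h
  injection h with h' _
  exact hbb h'

/-- A right-special, non-left-special word extends on the left to a right-special word. -/
lemma rightSpecial_step (hmin : IsMinimalSubshift Ω) {v : List A} {a : A}
    (hR : 2 ≤ (rightExt Ω v).ncard) (hL : ¬ 2 ≤ (leftExt Ω v).ncard)
    (ha : a :: v ∈ language Ω) :
    2 ≤ (rightExt Ω (a :: v)).ncard := by
  obtain ⟨W₁, h1, W₂, h2, h12⟩ := exists_pair_of_two_le (rightExt_finite Ω v) hR
  obtain ⟨c₁, rfl⟩ := rightExt_elem h1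
  obtain ⟨c₂, rfl⟩ := rightExt_elem h2
  have hcc : c₁ ≠ c₂ := by
    intro h
    exact h12 (by rw [h])
  have claim : ∀ c, v ++ [c] ∈ language Ω → (a :: v) ++ [c] ∈ language Ω := by
    intro c hc
    obtain ⟨b, hb⟩ := exists_cons_mem hmin hc
    have hbv : b :: v ∈ language Ω := by
      have htk := take_mem_language hb (m := v.length + 1) (by simp)
      have he : (b :: (v ++ [c])).take (v.length + 1) = b :: v := by
        rw [List.take_succ_cons, List.take_left]
      rwa [he] at htk
    have hmem1 : b :: v ∈ leftExt Ω v := cons_mem_leftExt hbv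
    have hmem2 : a :: v ∈ leftExt Ω v := cons_mem_leftExt ha
    have heq : a :: v = b :: v := eq_of_not_two_le (leftExt_finite Ω v) hL hmem2 hmem1
    have hab : a = b := by injection heq
    rw [hab, List.cons_append]
    exact hb
  have m1 : (a :: v) ++ [c₁] ∈ rightExt Ω (a :: v) := append_mem_rightExt (claim c₁ h1.1.1)
  have m2 : (a :: v) ++ [c₂] ∈ rightExt Ω (a :: v) := append_mem_rightExt (claim c₂ h2.1.1)
  refine two_le_ncard_of (rightExt_finite Ω _) m1 m2 ?_
  intro h
  have := List.append_cancel_left h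
  simp at this
  exact hcc this

/-- If there is no bispecial word of length in `[n, n+t)`, then a word with
left-special length-`n` prefix and right-special length-`n` suffix is bispecial. -/
lemma chain (hmin : IsMinimalSubshift Ω) {x : ℕ → A} {i n t : ℕ} (hx : x ∈ Ω)
    (hL : 2 ≤ (leftExt Ω (word x i n)).ncard)
    (hR : 2 ≤ (rightExt Ω (word x (i + t) n)).ncard)
    (hnob : ∀ ℓ w, n ≤ ℓ → ℓ < n + t → w ∈ Lang Ω ℓ → ¬ IsBispecial Ω w) :
    IsBispecial Ω (word x i (n + t)) := by
  have hpre : ∀ s, s ≤ t → 2 ≤ (leftExt Ω (word x i (n + s))).ncard := by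
    intro s
    induction s with
    | zero => intro _; simpa using hL
    | succ s ih =>
      intro hst
      have hLs := ih (by omega)
      have hmem : word x i (n + s) ∈ Lang Ω (n + s) := word_mem_Lang x hx i (n + s)
      have hnb := hnob (n + s) _ (by omega) (by omega) hmem
      have hRs : ¬ 2 ≤ (rightExt Ω (word x i (n + s))).ncard := fun h => hnb ⟨hLs, h⟩
      have ha : word x i (n + s) ++ [x (i + (n + s))] ∈ language Ω := by
        rw [← word_succ_last]
        exact word_mem_language x hx i (n + s + 1)
      have hres := leftSpecial_step hLs hRs ha
      rw [← word_succ_last] at hres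
      exact hres
  have hsuf : ∀ s, s ≤ t → 2 ≤ (rightExt Ω (word x (i + (t - s)) (n + s))).ncard := by
    intro s
    induction s with
    | zero => intro _; simpa using hR
    | succ s ih =>
      intro hst
      have hRs := ih (by omega)
      have hmem : word x (i + (t - s)) (n + s) ∈ Lang Ω (n + s) :=
        word_mem_Lang x hx _ (n + s)
      have hnb := hnob (n + s) _ (by omega) (by omega) hmem
      have hLs : ¬ 2 ≤ (leftExt Ω (word x (i + (t - s)) (n + s))).ncard :=
        fun h => hnb ⟨h, hRs⟩
      have ha : x (i + (t - (s + 1))) :: word x (i + (t - s)) (n + s) ∈ language Ω := by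
        have h1 : word x (i + (t - (s + 1))) (n + s + 1) ∈ language Ω :=
          word_mem_language x hx _ _
        rw [word_succ_head] at h1
        have e : i + (t - (s + 1)) + 1 = i + (t - s) := by omega
        rwa [e] at h1
      have hres := rightSpecial_step hmin hRs hLs ha
      show 2 ≤ (rightExt Ω (word x (i + (t - (s + 1))) (n + s + 1))).ncard
      rw [word_succ_head]
      have e : i + (t - (s + 1)) + 1 = i + (t - s) := by omega
      rw [e]
      exact hres
  constructor
  · exact hpre t le_rfl
  · have := hsuf t le_rfl
    simpa using this

end Chain
end NBB

/-- for an aperiodic minimal shift with `p(n) = Kn + C` for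
`n ≥ n₀`, for all sufficiently large `n` there is a bispecial word of some
length `n'` with `n ≤ n'` and `n' - n < (K+1)·n`. -/
theorem next_bispecial_bound {A : Type*} [Fintype A]
    [TopologicalSpace A] [DiscreteTopology A]
    (Ω : Set (ℕ → A)) (hmin : IsMinimalSubshift Ω) (hap : IsAperiodic Ω)
    (K n₀ : ℕ) (C : ℕ) (hK : 0 < K)
    (hp : ∀ n, n₀ ≤ n → complexity Ω n = K * n + C) :
    ∃ N, ∀ n, N ≤ n → ∃ n', n ≤ n' ∧ n' - n < (K + 1) * n ∧
      ∃ w ∈ Lang Ω n', IsBispecial Ω w := by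
  refine ⟨n₀ + C + 1, fun n hn => ?_⟩
  have hn₀ : n₀ ≤ n := by omega
  have hn₀' : n₀ ≤ n + 1 := by omega
  have hlt : complexity Ω n < complexity Ω (n + 1) := by
    rw [hp n hn₀, hp (n + 1) hn₀', Nat.mul_succ]
    omega
  obtain ⟨u, hu, huL⟩ := NBB.exists_leftSpecial hlt
  obtain ⟨x, hx, i, hw⟩ := NBB.mem_language_iff.mp hu.1
  rw [hu.2] at hw
  rw [hw] at huL
  have hn1 : 1 ≤ n := by omega
  obtain ⟨j, hij, hjp, hjR⟩ := NBB.exists_rightSpecial_window hap hmin.1 hx hn1 i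
  have hjt : j = i + (j - i) := by omega
  rw [hjt] at hjR
  have hpn : complexity Ω n = K * n + C := hp n hn₀
  have hKn : (K + 1) * n = K * n + n := by ring
  have ht : j - i ≤ K * n + C := by omega
  by_cases hb : ∃ ℓ, n ≤ ℓ ∧ ℓ < n + (j - i) ∧ ∃ w ∈ Lang Ω ℓ, IsBispecial Ω w
  · obtain ⟨ℓ, h1, h2, w, hw2, hbw⟩ := hb
    exact ⟨ℓ, h1, by omega, w, hw2, hbw⟩
  · push_neg at hb
    have hbis := NBB.chain hmin hx huL hjR (fun ℓ w h1 h2 hw => hb ℓ h1 h2 w hw)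
    exact ⟨n + (j - i), by omega, by omega, word x i (n + (j - i)),
      NBB.word_mem_Lang x hx i (n + (j - i)), hbis⟩
end
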